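/- Let H be a ℂ-vector space, A a unital associative ℂ-algebra, N ≥ 1, Ψ : H → A a ℂ-linear map, v₀ ∈ H, and let T, T' be N×N matrices of ℂ-linear endomorphisms of H and K an N×N matrix over A satisfying the KT-relation: for all h ∈ H and 1 ≤ i,j ≤ N, Σ_{k=1}^{N} K_{i,k} · Ψ(T_{k,j} h) = Σ_{k=1}^{N} Ψ(T'_{i,k} h) · K_{k,j}. Assume v₀ is a highest-weight vector for both T and T': T_{i,j} v₀ = 0 and T'_{i,j} v₀ = 0 for i > j, T_{1,1} v₀ = λ₁ v₀ and T'_{N,N} v₀ = μ_N v₀ for scalars λ₁, μ_N ∈ ℂ. If λ₁ = μ_N ≠ 0, then K_{N,1} commutes with B := Ψ(v₀), i.e. K_{N,1} · B = B · K_{N,1}. -/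
import Mathlib


/-- Vacuum-commutation part of Lemma C.3 (uncrossed KT-relation):
the (N,1) entry of the K-matrix commutes with the vacuum overlap B = Ψ(v₀). -/
theorem stmt_4 {H A : Type*} [AddCommGroup H] [Module ℂ H] [Ring A] [Algebra ℂ A]
    (N : ℕ) (hN : 1 ≤ N)
    (Ψ : H →ₗ[ℂ] A) (v₀ : H)
    (T T' : Fin N → Fin N → (H →ₗ[ℂ] H))
    (K : Fin N → Fin N → A)
    (hKT : ∀ (h : H) (i j : Fin N),
      ∑ k, K i k * Ψ ((T k j) h) = ∑ k, Ψ ((T' i k) h) * K k j)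
    (hT : ∀ i j : Fin N, j < i → (T i j) v₀ = 0)
    (hT' : ∀ i j : Fin N, j < i → (T' i j) v₀ = 0)
    (lam1 muN : ℂ)
    (hlam : (T ⟨0, by omega⟩ ⟨0, by omega⟩) v₀ = lam1 • v₀)
    (hmu : (T' ⟨N - 1, by omega⟩ ⟨N - 1, by omega⟩) v₀ = muN • v₀)
    (heq : lam1 = muN) (hne : lam1 ≠ 0) :
    K ⟨N - 1, by omega⟩ ⟨0, by omega⟩ * Ψ v₀ =
      Ψ v₀ * K ⟨N - 1, by omega⟩ ⟨0, by omega⟩ := by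
  have key := hKT v₀ ⟨N - 1, by omega⟩ ⟨0, by omega⟩
  have hL : ∑ k, K ⟨N - 1, by omega⟩ k * Ψ ((T k ⟨0, by omega⟩) v₀)
      = lam1 • (K ⟨N - 1, by omega⟩ ⟨0, by omega⟩ * Ψ v₀) := by
    rw [Finset.sum_eq_single (⟨0, by omega⟩ : Fin N)]
    · rw [hlam, map_smul, Algebra.mul_smul_comm]
    · intro k _ hk
      rw [hT k ⟨0, by omega⟩ (by
        rcases Fin.lt_or_lt_of_ne hk with h | h
        · exact absurd h (by simp [Fin.lt_def])
        · exact h), map_zero, mul_zero]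
    · simp
  have hR : ∑ k, Ψ ((T' ⟨N - 1, by omega⟩ k) v₀) * K k ⟨0, by omega⟩
      = muN • (Ψ v₀ * K ⟨N - 1, by omega⟩ ⟨0, by omega⟩) := by
    rw [Finset.sum_eq_single (⟨N - 1, by omega⟩ : Fin N)]
    · rw [hmu, map_smul, Algebra.smul_mul_assoc]
    · intro k _ hk
      rw [hT' ⟨N - 1, by omega⟩ k (by
        rcases Fin.lt_or_lt_of_ne hk with h | h
        · exact h
        · exact absurd h (by simp [Fin.lt_def]; omega)), map_zero, zero_mul]
    · simp
  rw [hL, hR, ← heq] at key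
  exact smul_right_injective A hne key
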